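/- arXiv:1602.01507 — 2 statements merged into one kernel-verified Lean document; each statement's English description precedes it below -/
import Mathlib

section
/- Let $(d_n)$ be a sequence of integers with $d_n\ge 2$, let $n\ge 1$, and let $\varepsilon_1,\dots,\varepsilon_n$ be digits with $\varepsilon_k\in\{0,\dots,d_k-1\}$ and $\varepsilon_n\ne 0$. Then the expansion $\sum_{k\ge 1}\frac{(-1)^k\varepsilon_k}{d_1\cdots d_k}$ with digit sequence given by the prefix $\varepsilon_1\dots\varepsilon_n$ followed by the tail $(d_{n+1}-1, 0, d_{n+3}-1, 0, \dots)$ equals the expansion with digit sequence given by the prefix $\varepsilon_1\dots\varepsilon_{n-1}(\varepsilon_n-1)$ followed by the tail $(0, d_{n+2}-1, 0, d_{n+4}-1, \dots)$. -/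
/-- `D d n = d₁ d₂ ⋯ dₙ`. -/
noncomputable def cantorDenom (d : ℕ → ℕ) (n : ℕ) : ℝ := ∏ j ∈ Finset.Icc 1 n, (d j : ℝ)

lemma cantorDenom_pos (d : ℕ → ℕ) (hd : ∀ n, 1 ≤ n → 2 ≤ d n) (m : ℕ) :
    0 < cantorDenom d m := by
  apply Finset.prod_pos
  intro j hj
  have h := hd j (Finset.mem_Icc.mp hj).1
  exact_mod_cast Nat.lt_of_lt_of_le (by norm_num) h

lemma cantorDenom_succ (d : ℕ → ℕ) (m : ℕ) :
    cantorDenom d (m + 1) = cantorDenom d m * d (m + 1) :=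
  Finset.prod_Icc_succ_top (by omega) _

lemma two_pow_le_cantorDenom (d : ℕ → ℕ) (hd : ∀ n, 1 ≤ n → 2 ≤ d n) (m : ℕ) :
    (2 : ℝ) ^ m ≤ cantorDenom d m := by
  induction m with
  | zero => simp [cantorDenom]
  | succ k ih =>
    rw [cantorDenom_succ, pow_succ]
    have h2 : (2 : ℝ) ≤ d (k + 1) := by exact_mod_cast hd (k + 1) (by omega)
    nlinarith [cantorDenom_pos d hd k, pow_pos (by norm_num : (0:ℝ) < 2) k]

lemma cantorDenom_key (d : ℕ → ℕ) (hd : ∀ n, 1 ≤ n → 2 ≤ d n) (m : ℕ) :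
    ((d (m + 1) : ℝ) - 1) / cantorDenom d (m + 1)
      = (cantorDenom d m)⁻¹ - (cantorDenom d (m + 1))⁻¹ := by
  have h1 := (cantorDenom_pos d hd m).ne'
  have h2 : (d (m + 1) : ℝ) ≠ 0 := by
    have := hd (m + 1) (by omega); positivity
  rw [cantorDenom_succ d m]
  field_simp

lemma hasSum_tail (d : ℕ → ℕ) (hd : ∀ n, 1 ≤ n → 2 ≤ d n) (n : ℕ) :
    HasSum (fun j : ℕ => ((d (n + j + 1) : ℝ) - 1) / cantorDenom d (n + j + 1))
      (cantorDenom d n)⁻¹ := by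
  have hg : ∀ j : ℕ, ((d (n + j + 1) : ℝ) - 1) / cantorDenom d (n + j + 1)
      = (cantorDenom d (n + j))⁻¹ - (cantorDenom d (n + j + 1))⁻¹ :=
    fun j => cantorDenom_key d hd (n + j)
  have hnonneg : ∀ j : ℕ, 0 ≤ ((d (n + j + 1) : ℝ) - 1) / cantorDenom d (n + j + 1) := by
    intro j
    have h2 : (2 : ℝ) ≤ d (n + j + 1) := by exact_mod_cast hd (n + j + 1) (by omega)
    have hp := cantorDenom_pos d hd (n + j + 1)
    apply div_nonneg (by linarith) hp.le
  rw [hasSum_iff_tendsto_nat_of_nonneg hnonneg]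
  have hsum : ∀ N : ℕ, ∑ i ∈ Finset.range N,
      ((d (n + i + 1) : ℝ) - 1) / cantorDenom d (n + i + 1)
      = (cantorDenom d n)⁻¹ - (cantorDenom d (n + N))⁻¹ := by
    intro N
    calc ∑ i ∈ Finset.range N, ((d (n + i + 1) : ℝ) - 1) / cantorDenom d (n + i + 1)
        = ∑ i ∈ Finset.range N,
            ((cantorDenom d (n + i))⁻¹ - (cantorDenom d (n + i + 1))⁻¹) :=
          Finset.sum_congr rfl (fun i _ => hg i)
      _ = (cantorDenom d (n + 0))⁻¹ - (cantorDenom d (n + N))⁻¹ :=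
          Finset.sum_range_sub' (fun i => (cantorDenom d (n + i))⁻¹) N
      _ = (cantorDenom d n)⁻¹ - (cantorDenom d (n + N))⁻¹ := by norm_num
  simp only [hsum]
  have htend : Filter.Tendsto (fun N : ℕ => (cantorDenom d (n + N))⁻¹)
      Filter.atTop (nhds 0) := by
    have h0 : Filter.Tendsto (fun N : ℕ => ((2 : ℝ)⁻¹) ^ N) Filter.atTop (nhds 0) :=
      tendsto_pow_atTop_nhds_zero_of_lt_one (by norm_num) (by norm_num)
    refine squeeze_zero (fun N => (inv_nonneg).2 (cantorDenom_pos d hd (n + N)).le) (fun N => ?_) h0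
    have hle : (2 : ℝ) ^ N ≤ cantorDenom d (n + N) := by
      calc (2 : ℝ) ^ N ≤ (2 : ℝ) ^ (n + N) := by
            apply pow_le_pow_right₀ (by norm_num) (by omega)
        _ ≤ _ := two_pow_le_cantorDenom d hd (n + N)
    calc (cantorDenom d (n + N))⁻¹ ≤ ((2 : ℝ) ^ N)⁻¹ := by
          apply inv_anti₀ (by positivity) hle
      _ = ((2 : ℝ)⁻¹) ^ N := by rw [inv_pow]
  have := Filter.Tendsto.const_sub ((cantorDenom d n)⁻¹) htend
  simpa using this

/-- Non-uniqueness for alternating Cantor series: the expansion with prefix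
`ε₁…εₙ` (with `εₙ ≠ 0`) and tail `(d_{n+1}-1, 0, d_{n+3}-1, 0, …)` equals the expansion
with prefix `ε₁…ε_{n-1}(εₙ-1)` and tail `(0, d_{n+2}-1, 0, d_{n+4}-1, …)`. -/
theorem alternating_cantor_two_representations (d : ℕ → ℕ) (hd : ∀ n, 1 ≤ n → 2 ≤ d n)
    (n : ℕ) (hn : 1 ≤ n) (ε : ℕ → ℕ) (hε : ∀ k, 1 ≤ k → k ≤ n → ε k < d k)
    (hεn : ε n ≠ 0) :
    (∑ k ∈ Finset.Icc 1 n, ((-1 : ℝ)) ^ k * (ε k : ℝ) / cantorDenom d k)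
      + (∑' j : ℕ, ((-1 : ℝ)) ^ (n + 2 * j + 1) * ((d (n + 2 * j + 1) : ℝ) - 1)
          / cantorDenom d (n + 2 * j + 1))
    = (∑ k ∈ Finset.Icc 1 (n - 1), ((-1 : ℝ)) ^ k * (ε k : ℝ) / cantorDenom d k)
      + ((-1 : ℝ)) ^ n * ((ε n : ℝ) - 1) / cantorDenom d n
      + (∑' j : ℕ, ((-1 : ℝ)) ^ (n + 2 * j + 2) * ((d (n + 2 * j + 2) : ℝ) - 1)
          / cantorDenom d (n + 2 * j + 2)) := by
  -- the full tail sums to (cantorDenom d n)⁻¹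
  set g : ℕ → ℝ := fun j => ((d (n + j + 1) : ℝ) - 1) / cantorDenom d (n + j + 1) with hgdef
  have hS := hasSum_tail d hd n
  have hSummable : Summable g := hS.summable
  have hA : Summable (fun k : ℕ => g (2 * k)) :=
    hSummable.comp_injective (fun a b h => by omega)
  have hB : Summable (fun k : ℕ => g (2 * k + 1)) :=
    hSummable.comp_injective (fun a b h => by omega)
  have hAB : (∑' k : ℕ, g (2 * k)) + (∑' k : ℕ, g (2 * k + 1)) = (cantorDenom d n)⁻¹ := by
    rw [tsum_even_add_odd hA hB, hS.tsum_eq]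
  -- rewrite the two tails in the statement
  have hT1 : (∑' j : ℕ, ((-1 : ℝ)) ^ (n + 2 * j + 1) * ((d (n + 2 * j + 1) : ℝ) - 1)
      / cantorDenom d (n + 2 * j + 1)) = -((-1 : ℝ)) ^ n * (∑' k : ℕ, g (2 * k)) := by
    rw [← tsum_mul_left]
    apply tsum_congr
    intro j
    have hpow : ((-1 : ℝ)) ^ (n + 2 * j + 1) = -((-1 : ℝ)) ^ n := by
      rw [pow_add, pow_add, pow_mul]
      norm_num
    have hidx : n + 2 * j + 1 = n + (2 * j) + 1 := rfl
    rw [hpow]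
    simp only [hgdef]
    ring
  have hT2 : (∑' j : ℕ, ((-1 : ℝ)) ^ (n + 2 * j + 2) * ((d (n + 2 * j + 2) : ℝ) - 1)
      / cantorDenom d (n + 2 * j + 2)) = ((-1 : ℝ)) ^ n * (∑' k : ℕ, g (2 * k + 1)) := by
    rw [← tsum_mul_left]
    apply tsum_congr
    intro j
    have hpow : ((-1 : ℝ)) ^ (n + 2 * j + 2) = ((-1 : ℝ)) ^ n := by
      rw [pow_add, pow_add, pow_mul]
      norm_num
    have hidx : n + 2 * j + 2 = n + (2 * j + 1) + 1 := by ring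
    rw [hpow, hidx]
    simp only [hgdef]
    ring
  rw [hT1, hT2]
  -- split off the top term of the prefix sum
  obtain ⟨m, rfl⟩ : ∃ m, n = m + 1 := ⟨n - 1, (Nat.succ_pred_eq_of_pos hn).symm⟩
  rw [Finset.sum_Icc_succ_top (by omega : 1 ≤ m + 1)]
  simp only [Nat.add_sub_cancel]
  linear_combination ((-1 : ℝ)) ^ m * hAB
end

section
/- Let $\tilde Q=(q_{i,j})$ be as in the nega-$\tilde Q$ setup with all $m_n<\infty$, and suppose $q_{0,n}=q_0$ and $q_{m_n,n}=q_m$ for all $n>1$, with $q_{0,1}=q_1$, $q_{m_1,1}=q_2$, and $0<q_0,q_m,q_1,q_2<1$. Then $t'_0 = q_2\left(1-\frac{(1-q_m)q_0}{1-q_0 q_m}\right) - 1$ and $t''_0 = \frac{1-q_m}{1-q_0 q_m}\, q_1$, where $t'_0$ is the sum of the nega-$\tilde Q$ series for the digit sequence $(m_1,0,m_3,0,\dots)$ and $t''_0$ that for $(0,m_2,0,m_4,\dots)$. -/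
/-- Partial column sum a_(i,k). -/
noncomputable def colA (q : ℕ → ℕ → ℝ) (i k : ℕ) : ℝ := ∑ t ∈ Finset.range i, q t k

/-- Value of the (analytic) nega-Q-tilde series for digit sequence I. -/
noncomputable def negaQVal (q : ℕ → ℕ → ℝ) (I : ℕ → ℕ) : ℝ :=
  ∑' k : ℕ, ((-1 : ℝ)) ^ (k + 1) * colA q (I (k + 1)) (k + 1) *
    ∏ j ∈ Finset.Icc 1 k, q (I j) j

/-!
Every second digit is `0` and `a_{0,k} = 0`, so only every second term of the series survives.
In a surviving term the digit is the last one of its column, so the column sums give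
`a_{m_k,k} = 1 - q_{m_k,k}`, and from the first pair of columns on each further pair of factors of
the running product is `q_0 q_m`; the surviving terms thus form a geometric series of ratio
`q_0 q_m`.
-/

open Finset

-- The summand of index `k` is the paper's term of index `n = k + 1`.
noncomputable def negaQTerm (q : ℕ → ℕ → ℝ) (I : ℕ → ℕ) (k : ℕ) : ℝ :=
  (-1 : ℝ) ^ (k + 1) * colA q (I (k + 1)) (k + 1) * ∏ j ∈ Icc 1 k, q (I j) j

lemma colA_zero (q : ℕ → ℕ → ℝ) (k : ℕ) : colA q 0 k = 0 := by
  simp [colA]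

lemma colA_eq_one_sub {q : ℕ → ℕ → ℝ} {n k : ℕ}
    (hsum : ∑ i ∈ range (n + 1), q i k = 1) : colA q n k = 1 - q n k := by
  rw [sum_range_succ] at hsum
  rw [colA]
  linarith

lemma negaQTerm_of_digit_eq_zero (q : ℕ → ℕ → ℝ) {I : ℕ → ℕ} {k : ℕ} (h : I (k + 1) = 0) :
    negaQTerm q I k = 0 := by
  simp [negaQTerm, h, colA_zero]

lemma negaQTerm_of_digit_eq_last {q : ℕ → ℕ → ℝ} {m I : ℕ → ℕ} {k : ℕ}
    (hsum : ∑ i ∈ range (m (k + 1) + 1), q i (k + 1) = 1) (h : I (k + 1) = m (k + 1)) :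
    negaQTerm q I k =
      (-1 : ℝ) ^ (k + 1) * (1 - q (m (k + 1)) (k + 1)) * ∏ j ∈ Icc 1 k, q (I j) j := by
  rw [negaQTerm, h, colA_eq_one_sub hsum]

lemma negaQVal_eq_tsum_even {q : ℕ → ℕ → ℝ} {I : ℕ → ℕ} (h : ∀ ℓ, I (2 * ℓ + 2) = 0) :
    negaQVal q I = ∑' ℓ, negaQTerm q I (2 * ℓ) := by
  refine ((show (fun ℓ ↦ 2 * ℓ).Injective from fun a b hab ↦ by grind).tsum_eq fun k hk ↦ ?_).symm
  obtain ⟨ℓ, rfl | rfl⟩ := Nat.even_or_odd' k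
  · exact ⟨ℓ, rfl⟩
  · exact absurd (negaQTerm_of_digit_eq_zero q (h ℓ)) hk

lemma negaQVal_eq_tsum_odd {q : ℕ → ℕ → ℝ} {I : ℕ → ℕ} (h : ∀ ℓ, I (2 * ℓ + 1) = 0) :
    negaQVal q I = ∑' ℓ, negaQTerm q I (2 * ℓ + 1) := by
  refine ((show (fun ℓ ↦ 2 * ℓ + 1).Injective from fun a b hab ↦ by grind).tsum_eq fun k hk ↦ ?_).symm
  obtain ⟨ℓ, rfl | rfl⟩ := Nat.even_or_odd' k
  · exact absurd (negaQTerm_of_digit_eq_zero q (h ℓ)) hk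
  · exact ⟨ℓ, rfl⟩

lemma prod_Icc_one_add_two_mul_of_pair_eq {M : Type*} [CommMonoid M] {a : ℕ → M} {r : M} (k : ℕ)
    (hr : ∀ i, a (k + 2 * i + 1) * a (k + 2 * i + 2) = r) (ℓ : ℕ) :
    ∏ j ∈ Icc 1 (k + 2 * ℓ), a j = (∏ j ∈ Icc 1 k, a j) * r ^ ℓ := by
  induction ℓ with
  | zero => simp
  | succ ℓ ih =>
    rw [show k + 2 * (ℓ + 1) = k + 2 * ℓ + 1 + 1 by ring, prod_Icc_succ_top (by omega),
      prod_Icc_succ_top (by omega), mul_assoc, ih, hr ℓ, pow_succ, mul_assoc]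

lemma tsum_mul_geometric {r : ℝ} (c : ℝ) (hr : |r| < 1) :
    ∑' ℓ, c * r ^ ℓ = c / (1 - r) := by
  rw [tsum_mul_left, tsum_geometric_of_abs_lt_one hr, div_eq_mul_inv]

section ConstantExtremes

variable {m : ℕ → ℕ} {q : ℕ → ℕ → ℝ} {q0 qm : ℝ}
  (hsum : ∀ j, 1 ≤ j → ∑ i ∈ range (m j + 1), q i j = 1)
  (h0 : ∀ n, 1 < n → q 0 n = q0) (hmn : ∀ n, 1 < n → q (m n) n = qm)
  (hr : |q0 * qm| < 1)
include hsum h0 hmn hr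

lemma negaQVal_oddDigits :
    negaQVal q (fun k ↦ if Odd k then m k else 0) =
      -(1 - q (m 1) 1) - (1 - qm) * q (m 1) 1 * q0 / (1 - q0 * qm) := by
  set I : ℕ → ℕ := fun k ↦ if Odd k then m k else 0
  have hI_odd {k : ℕ} (hk : Odd k) : I k = m k := if_pos hk
  have hI_even {k : ℕ} (hk : Even k) : I k = 0 := if_neg (Nat.not_odd_iff_even.2 hk)
  have hbase : ∏ j ∈ Icc 1 2, q (I j) j = q (m 1) 1 * q0 := by
    simp [I, prod_Icc_succ_top, h0, Nat.odd_iff]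
  have hpair (i : ℕ) :
      q (I (2 + 2 * i + 1)) (2 + 2 * i + 1) * q (I (2 + 2 * i + 2)) (2 + 2 * i + 2) = q0 * qm := by
    rw [hI_odd ⟨i + 1, by ring⟩, hI_even ⟨i + 2, by ring⟩, hmn _ (by omega), h0 _ (by omega),
      mul_comm]
  have hprod (ℓ : ℕ) : ∏ j ∈ Icc 1 (2 + 2 * ℓ), q (I j) j = q (m 1) 1 * q0 * (q0 * qm) ^ ℓ := by
    rw [prod_Icc_one_add_two_mul_of_pair_eq 2 hpair, hbase]
  have hterm (ℓ : ℕ) :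
      negaQTerm q I (2 * ℓ + 2) = -(1 - qm) * q (m 1) 1 * q0 * (q0 * qm) ^ ℓ := by
    rw [negaQTerm_of_digit_eq_last (hsum _ (by omega)) (hI_odd ⟨ℓ + 1, by ring⟩),
      hmn _ (by omega), add_comm _ 2, hprod, (by ring : 2 + 2 * ℓ + 1 = 2 * (ℓ + 1) + 1),
      pow_succ, Even.neg_one_pow ⟨ℓ + 1, by ring⟩]
    ring
  have hterm_zero : negaQTerm q I 0 = -(1 - q (m 1) 1) := by
    simp [negaQTerm_of_digit_eq_last (hsum 1 le_rfl) (hI_odd odd_one)]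
  rw [negaQVal_eq_tsum_even fun ℓ ↦ hI_even ⟨ℓ + 1, by ring⟩,
    tsum_eq_zero_add' (by
      simpa only [mul_add, hterm] using (summable_geometric_of_abs_lt_one hr).mul_left _)]
  simp only [mul_add, hterm, hterm_zero, tsum_mul_geometric _ hr]
  ring

lemma negaQVal_evenDigits :
    negaQVal q (fun k ↦ if Odd k then 0 else m k) = (1 - qm) * q 0 1 / (1 - q0 * qm) := by
  set I : ℕ → ℕ := fun k ↦ if Odd k then 0 else m k
  have hI_odd {k : ℕ} (hk : Odd k) : I k = 0 := if_pos hk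
  have hI_even {k : ℕ} (hk : Even k) : I k = m k := if_neg (Nat.not_odd_iff_even.2 hk)
  have hpair (i : ℕ) :
      q (I (1 + 2 * i + 1)) (1 + 2 * i + 1) * q (I (1 + 2 * i + 2)) (1 + 2 * i + 2) = q0 * qm := by
    rw [hI_even ⟨i + 1, by ring⟩, hI_odd ⟨i + 1, by ring⟩, hmn _ (by omega), h0 _ (by omega),
      mul_comm]
  have hprod (ℓ : ℕ) : ∏ j ∈ Icc 1 (1 + 2 * ℓ), q (I j) j = q 0 1 * (q0 * qm) ^ ℓ := by
    rw [prod_Icc_one_add_two_mul_of_pair_eq 1 hpair, Icc_self, prod_singleton, hI_odd odd_one]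
  have hterm (ℓ : ℕ) : negaQTerm q I (2 * ℓ + 1) = (1 - qm) * q 0 1 * (q0 * qm) ^ ℓ := by
    rw [negaQTerm_of_digit_eq_last (hsum _ (by omega)) (hI_even ⟨ℓ + 1, by ring⟩),
      hmn _ (by omega), add_comm (2 * ℓ) 1, hprod, Even.neg_one_pow ⟨ℓ + 1, by ring⟩]
    ring
  rw [negaQVal_eq_tsum_odd fun ℓ ↦ hI_odd ⟨ℓ, rfl⟩]
  simp only [hterm, tsum_mul_geometric _ hr]

end ConstantExtremes

theorem negaQ_extrema_explicit_general (m : ℕ → ℕ) (q : ℕ → ℕ → ℝ)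
    (hsum : ∀ j, 1 ≤ j → ∑ i ∈ Finset.range (m j + 1), q i j = 1)
    (q0 qm q1 q2 : ℝ)
    (hq0 : 0 < q0) (hq0' : q0 < 1) (hqm : 0 < qm) (hqm' : qm < 1)
    (h0 : ∀ n, 1 < n → q 0 n = q0) (hmn : ∀ n, 1 < n → q (m n) n = qm)
    (h01 : q 0 1 = q1) (hm1 : q (m 1) 1 = q2) :
    negaQVal q (fun k => if Odd k then m k else 0)
      = q2 * (1 - ((1 - qm) * q0) / (1 - q0 * qm)) - 1 ∧
    negaQVal q (fun k => if Odd k then 0 else m k)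
      = (1 - qm) / (1 - q0 * qm) * q1 := by
  have hr : |q0 * qm| < 1 := by
    rw [abs_of_pos (mul_pos hq0 hqm)]
    nlinarith
  constructor
  · rw [negaQVal_oddDigits hsum h0 hmn hr, hm1]
    ring
  · rw [negaQVal_evenDigits hsum h0 hmn hr, h01]
    ring

/-- explicit values of t'0 and t''0 when the extreme entries of the
matrix are constant from the second column on. -/
theorem negaQ_extrema_explicit (m : ℕ → ℕ) (q : ℕ → ℕ → ℝ)
    (hpos : ∀ j, 1 ≤ j → ∀ i, i ≤ m j → 0 < q i j)
    (hsum : ∀ j, 1 ≤ j → ∑ i ∈ Finset.range (m j + 1), q i j = 1)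
    (q0 qm q1 q2 : ℝ)
    (hq0 : 0 < q0) (hq0' : q0 < 1) (hqm : 0 < qm) (hqm' : qm < 1)
    (hq1 : 0 < q1) (hq1' : q1 < 1) (hq2 : 0 < q2) (hq2' : q2 < 1)
    (h0 : ∀ n, 1 < n → q 0 n = q0) (hmn : ∀ n, 1 < n → q (m n) n = qm)
    (h01 : q 0 1 = q1) (hm1 : q (m 1) 1 = q2) :
    negaQVal q (fun k => if Odd k then m k else 0)
      = q2 * (1 - ((1 - qm) * q0) / (1 - q0 * qm)) - 1 ∧
    negaQVal q (fun k => if Odd k then 0 else m k)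
      = (1 - qm) / (1 - q0 * qm) * q1 :=
  negaQ_extrema_explicit_general m q hsum q0 qm q1 q2 hq0 hq0' hqm hqm' h0 hmn h01 hm1
end
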